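/- arXiv:2102.04653 — 6 statements merged into one kernel-verified Lean document; each statement's English description precedes it below -/
import Mathlib

section
/- Let f: ℝ^m × ℝ^n → ℝ be L-smooth (its gradient is L-Lipschitz) and suppose f(x,·) is μ-strongly concave for every x. Let Y ⊆ ℝ^n be convex and h: ℝ^n → ℝ be convex, and define y*(x) as the unique maximizer over Y of y ↦ f(x,y) − h(y). Then the map x ↦ y*(x) is κ-Lipschitz continuous, where κ = L/μ. -/
/-!
Write `φₓ y = f (x, y) - h y`, which is `μ`-strongly concave on `Y`. Strong concavity gives
quadratic growth at the maximizer: `φₓ y + μ/2 ‖y - y*(x)‖² ≤ φₓ (y*(x))`. Adding the two growth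
inequalities for `x₁, x₂` leaves `μ ‖y₁ - y₂‖² ≤ (φₓ₁ - φₓ₂) y₁ - (φₓ₁ - φₓ₂) y₂`, and by the mean
value inequality `φₓ₁ - φₓ₂ = f (x₁, ·) - f (x₂, ·)` is `L ‖x₁ - x₂‖`-Lipschitz, since its gradient
is a difference of gradients of `f` at points at distance `‖x₁ - x₂‖`.
-/

open Filter Topology

open scoped NNReal

section StrongConcavity

variable {E : Type*} [NormedAddCommGroup E] [InnerProductSpace ℝ E] {s : Set E} {m : ℝ}
  {f g : E → ℝ}

lemma StrongConcaveOn.sub_convexOn (hf : StrongConcaveOn s m f) (hg : ConvexOn ℝ s g) :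
    StrongConcaveOn s m (f - g) := by
  simpa [StrongConcaveOn] using hf.sub (uniformConvexOn_zero.2 hg)

lemma StrongConcaveOn.add_sq_norm_sub_le_of_isMaxOn (hf : StrongConcaveOn s m f)
    {x y : E} (hx : x ∈ s) (hy : y ∈ s) (hmax : IsMaxOn f s x) :
    f y + m / 2 * ‖y - x‖ ^ 2 ≤ f x := by
  set c := m / 2 * ‖y - x‖ ^ 2
  suffices c ≤ f x - f y by linarith
  -- compare `f x` with `f` on the segment `[y, x]`, then let the weight `t` of `x` tend to `1`
  have htendsto : Tendsto (fun t : ℝ => t * c) (𝓝[<] 1) (𝓝 (1 * c)) :=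
    (tendsto_nhdsWithin_of_tendsto_nhds tendsto_id).mul_const c
  refine le_of_tendsto (one_mul c ▸ htendsto) ?_
  filter_upwards [Ioo_mem_nhdsLT (zero_lt_one' ℝ)] with t ⟨ht₀, ht₁⟩
  have hsegment := hf.2 hy hx (sub_pos.2 ht₁).le ht₀.le (sub_add_cancel 1 t)
  have hle : f ((1 - t) • y + t • x) ≤ f x :=
    hmax (hf.1 hy hx (sub_pos.2 ht₁).le ht₀.le (sub_add_cancel 1 t))
  simp only [smul_eq_mul] at hsegment
  have : (1 - t) * (t * c) ≤ (1 - t) * (f x - f y) := by linear_combination hsegment + hle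
  exact le_of_mul_le_mul_left this (sub_pos.2 ht₁)

end StrongConcavity

lemma lipschitzWith_sub_of_lipschitzWith_fderiv {𝕜 E F G : Type*} [RCLike 𝕜]
    [NormedAddCommGroup E] [NormedSpace 𝕜 E] [NormedAddCommGroup F] [NormedSpace 𝕜 F]
    [NormedAddCommGroup G] [NormedSpace 𝕜 G] {f : E × F → G} {K : ℝ≥0}
    (hf : Differentiable 𝕜 f) (hf' : LipschitzWith K (fderiv 𝕜 f)) (x₁ x₂ : E) :
    LipschitzWith (K * nndist x₁ x₂) fun y => f (x₁, y) - f (x₂, y) := by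
  have hderiv : ∀ y, HasFDerivAt (fun y => f (x₁, y) - f (x₂, y))
      ((fderiv 𝕜 f (x₁, y) - fderiv 𝕜 f (x₂, y)).comp (ContinuousLinearMap.inr 𝕜 E F)) y :=
    fun y => ((hf _).hasFDerivAt.comp y (hasFDerivAt_prodMk_right x₁ y)).sub
      ((hf _).hasFDerivAt.comp y (hasFDerivAt_prodMk_right x₂ y))
  refine lipschitzWith_of_nnnorm_fderiv_le (fun y => (hderiv y).differentiableAt) fun y => ?_
  rw [(hderiv y).fderiv]
  calc ‖(fderiv 𝕜 f (x₁, y) - fderiv 𝕜 f (x₂, y)).comp (ContinuousLinearMap.inr 𝕜 E F)‖₊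
      ≤ ‖fderiv 𝕜 f (x₁, y) - fderiv 𝕜 f (x₂, y)‖₊ * ‖ContinuousLinearMap.inr 𝕜 E F‖₊ :=
        ContinuousLinearMap.opNNNorm_comp_le _ _
    _ ≤ nndist (fderiv 𝕜 f (x₁, y)) (fderiv 𝕜 f (x₂, y)) := by
        rw [nndist_eq_nnnorm]
        exact mul_le_of_le_one_right' (mod_cast ContinuousLinearMap.norm_inr_le_one 𝕜 E F)
    _ ≤ K * nndist (x₁, y) (x₂, y) := hf'.nndist_le _ _
    _ = K * nndist x₁ x₂ := by
        congr 1
        ext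
        exact dist_prod_same_right

lemma lipschitzWith_of_isMaxOn_of_strongConcaveOn {X E : Type*} [PseudoMetricSpace X]
    [NormedAddCommGroup E] [InnerProductSpace ℝ E] {s : Set E} {φ : X → E → ℝ} {ystar : X → E}
    {K μ : ℝ≥0} (hμ : 0 < μ) (hconc : ∀ x, StrongConcaveOn s μ (φ x))
    (hmem : ∀ x, ystar x ∈ s) (hmax : ∀ x, IsMaxOn (φ x) s (ystar x))
    (hlip : ∀ x₁ x₂, LipschitzOnWith (K * nndist x₁ x₂) (fun y => φ x₁ y - φ x₂ y) s) :
    LipschitzWith (K / μ) ystar := by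
  refine LipschitzWith.of_dist_le_mul fun x₁ x₂ => ?_
  set y₁ := ystar x₁
  set y₂ := ystar x₂
  have hgrowth₁ := (hconc x₁).add_sq_norm_sub_le_of_isMaxOn (hmem x₁) (hmem x₂) (hmax x₁)
  have hgrowth₂ := (hconc x₂).add_sq_norm_sub_le_of_isMaxOn (hmem x₂) (hmem x₁) (hmax x₂)
  rw [← dist_eq_norm, dist_comm] at hgrowth₁
  rw [← dist_eq_norm] at hgrowth₂
  have hsub : (φ x₁ y₁ - φ x₂ y₁) - (φ x₁ y₂ - φ x₂ y₂) ≤ K * dist x₁ x₂ * dist y₁ y₂ :=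
    (le_abs_self _).trans ((hlip x₁ x₂).dist_le_mul y₁ (hmem x₁) y₂ (hmem x₂))
  have hsq : μ * dist y₁ y₂ * dist y₁ y₂ ≤ K * dist x₁ x₂ * dist y₁ y₂ := by nlinarith
  rcases (dist_nonneg (x := y₁) (y := y₂)).eq_or_lt with hzero | hpos
  · rw [← hzero]
    positivity
  · rw [NNReal.coe_div, div_mul_eq_mul_div, le_div_iff₀ (NNReal.coe_pos.2 hμ), mul_comm]
    exact le_of_mul_le_mul_right hsq hpos

theorem ystar_lipschitz_general (m n : ℕ) (L μ : ℝ) (hμ : 0 < μ)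
    (f : (EuclideanSpace ℝ (Fin m)) × (EuclideanSpace ℝ (Fin n)) → ℝ)
    (Y : Set (EuclideanSpace ℝ (Fin n)))
    (hYconv : Convex ℝ Y)
    (h : EuclideanSpace ℝ (Fin n) → ℝ) (hconv : ConvexOn ℝ Set.univ h)
    (hdiff : Differentiable ℝ f)
    (hsmooth : LipschitzWith L.toNNReal (fderiv ℝ f))
    (hconc : ∀ x, ConcaveOn ℝ Y (fun y => f (x, y) + (μ / 2) * ‖y‖ ^ 2))
    (ystar : EuclideanSpace ℝ (Fin m) → EuclideanSpace ℝ (Fin n))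
    (hmem : ∀ x, ystar x ∈ Y)
    (hmax : ∀ x, ∀ y ∈ Y, f (x, y) - h y ≤ f (x, ystar x) - h (ystar x)) :
    LipschitzWith (L / μ).toNNReal ystar := by
  have hstrong : ∀ x, StrongConcaveOn Y μ.toNNReal fun y => f (x, y) - h y := fun x => by
    rw [Real.coe_toNNReal _ hμ.le]
    exact (strongConcaveOn_iff_convex.2 (hconc x)).sub_convexOn
      (hconv.subset (Set.subset_univ Y) hYconv)
  rw [Real.toNNReal_div' hμ.le]
  refine lipschitzWith_of_isMaxOn_of_strongConcaveOn (Real.toNNReal_pos.2 hμ) hstrong hmem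
    (fun x y hy => hmax x y hy) fun x₁ x₂ => ?_
  simpa using (lipschitzWith_sub_of_lipschitzWith_fderiv hdiff hsmooth x₁ x₂).lipschitzOnWith

/-- If `f` is `L`-smooth (its total gradient is `L`-Lipschitz), `f (x, ·)` is
`μ`-strongly concave for every `x`, `Y` is a nonempty compact convex set, `h` is convex and
`ystar x` is the (unique) maximizer of `y ↦ f (x, y) - h y` over `Y`, then `ystar` is
`κ = L/μ`-Lipschitz. -/
theorem ystar_lipschitz (m n : ℕ) (L μ : ℝ) (hL : 0 ≤ L) (hμ : 0 < μ)
    (f : (EuclideanSpace ℝ (Fin m)) × (EuclideanSpace ℝ (Fin n)) → ℝ)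
    (Y : Set (EuclideanSpace ℝ (Fin n))) (hYne : Y.Nonempty)
    (hYconv : Convex ℝ Y) (hYcpt : IsCompact Y)
    (h : EuclideanSpace ℝ (Fin n) → ℝ) (hconv : ConvexOn ℝ Set.univ h)
    (hdiff : Differentiable ℝ f)
    (hsmooth : LipschitzWith L.toNNReal (fderiv ℝ f))
    (hconc : ∀ x, ConcaveOn ℝ Y (fun y => f (x, y) + (μ / 2) * ‖y‖ ^ 2))
    (ystar : EuclideanSpace ℝ (Fin m) → EuclideanSpace ℝ (Fin n))
    (hmem : ∀ x, ystar x ∈ Y)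
    (hmax : ∀ x, ∀ y ∈ Y, f (x, y) - h y ≤ f (x, ystar x) - h (ystar x)) :
    LipschitzWith (L / μ).toNNReal ystar :=
  ystar_lipschitz_general m n L μ hμ f Y hYconv h hconv hdiff hsmooth hconc ystar hmem hmax
end

section
/- Under the same assumptions (f L-smooth, f(x,·) μ-strongly concave, h convex, Y compact convex), the function Φ(x) = max_{y∈Y} (f(x,y) − h(y)) is differentiable with ∇Φ(x) = ∇₁f(x, y*(x)), and ∇Φ is L(1+κ)-Lipschitz, where κ = L/μ and ∇₁ denotes the gradient in the first argument. -/
/-!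
Strong concavity of `ψₓ = f (x, ·) - h` gives quadratic growth around its maximiser:
`ψₓ y + μ/2 ‖y - y*(x)‖² ≤ ψₓ (y*(x))` on `Y`. Adding this at `x₁` and `x₂`, `h` cancels and the
mixed second difference of `f`, at most `L ‖x₁ - x₂‖ ‖y*(x₁) - y*(x₂)‖`, dominates
`μ ‖y*(x₁) - y*(x₂)‖²`; so `y*` is `κ`-Lipschitz. Next, `Φ (x + u) - Φ x` is squeezed between
`f (x + u, y*(x)) - f (x, y*(x))` and `f (x + u, y*(x + u)) - f (x, y*(x + u))`, and both equal
`∇₁f (x, y*(x)) u + O(‖u‖²)`, the second because `y*` is Lipschitz. Finally `x ↦ ∇₁f (x, y*(x))`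
factors through `∇f` and the `max 1 κ`-Lipschitz map `x ↦ (x, y*(x))`.
-/

open Filter Topology

open scoped NNReal

section Partial

variable {E F G : Type*} [NormedAddCommGroup E] [NormedSpace ℝ E]
  [NormedAddCommGroup F] [NormedSpace ℝ F] [NormedAddCommGroup G] [NormedSpace ℝ G]

noncomputable def fderivFst (f : E × F → G) (p : E × F) : E →L[ℝ] G :=
  (fderiv ℝ f p).comp (ContinuousLinearMap.inl ℝ E F)

theorem hasFDerivAt_fderivFst {f : E × F → G} {x : E} {y : F}
    (hf : DifferentiableAt ℝ f (x, y)) :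
    HasFDerivAt (fun x' => f (x', y)) (fderivFst f (x, y)) x :=
  hf.hasFDerivAt.comp x (hasFDerivAt_prodMk_left x y)

theorem lipschitzWith_fderivFst {f : E × F → G} {K : ℝ≥0}
    (hf' : LipschitzWith K (fderiv ℝ f)) : LipschitzWith K (fderivFst f) := by
  refine LipschitzWith.of_dist_le_mul fun p q => ?_
  calc dist (fderivFst f p) (fderivFst f q)
      = ‖(fderiv ℝ f p - fderiv ℝ f q).comp (ContinuousLinearMap.inl ℝ E F)‖ := by
        rw [dist_eq_norm, fderivFst, fderivFst, ContinuousLinearMap.sub_comp]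
    _ ≤ ‖fderiv ℝ f p - fderiv ℝ f q‖ * ‖ContinuousLinearMap.inl ℝ E F‖ :=
        ContinuousLinearMap.opNorm_comp_le _ _
    _ ≤ dist (fderiv ℝ f p) (fderiv ℝ f q) := by
        rw [dist_eq_norm]
        exact mul_le_of_le_one_right (norm_nonneg _) (ContinuousLinearMap.norm_inl_le_one _ _ _)
    _ ≤ K * dist p q := hf'.dist_le_mul p q

theorem norm_sub_sub_le_of_lipschitzWith_fderiv {g : E → G} {g' : E → E →L[ℝ] G} {K : ℝ≥0}
    (hg : ∀ x, HasFDerivAt g (g' x) x) (hg' : LipschitzWith K g') (x u : E) :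
    ‖g (x + u) - g x - g' x u‖ ≤ K * ‖u‖ ^ 2 := by
  have hbound : ∀ z ∈ Metric.closedBall x ‖u‖, ‖g' z - g' x‖ ≤ K * ‖u‖ := fun z hz => by
    rw [← dist_eq_norm]
    exact (hg'.dist_le_mul z x).trans (by gcongr; exact Metric.mem_closedBall.1 hz)
  have := (convex_closedBall x ‖u‖).norm_image_sub_le_of_norm_hasFDerivWithin_le'
    (fun z _ => (hg z).hasFDerivWithinAt) hbound (Metric.mem_closedBall_self (norm_nonneg u))
    (y := x + u) (by simp)
  rwa [add_sub_cancel_left, mul_assoc, ← sq] at this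

theorem norm_sub_sub_sub_le_of_lipschitzWith_fderiv {f : E × F → G} {K : ℝ≥0}
    (hf : Differentiable ℝ f) (hf' : LipschitzWith K (fderiv ℝ f)) (x₁ x₂ : E) (y₁ y₂ : F) :
    ‖f (x₁, y₁) - f (x₁, y₂) - (f (x₂, y₁) - f (x₂, y₂))‖ ≤ K * ‖y₁ - y₂‖ * ‖x₁ - x₂‖ := by
  have hderiv : ∀ x ∈ Set.univ, HasFDerivWithinAt (fun x => f (x, y₁) - f (x, y₂))
      (fderivFst f (x, y₁) - fderivFst f (x, y₂)) Set.univ x := fun x _ =>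
    ((hasFDerivAt_fderivFst (hf _)).sub (hasFDerivAt_fderivFst (hf _))).hasFDerivWithinAt
  have hbound : ∀ x ∈ Set.univ, ‖fderivFst f (x, y₁) - fderivFst f (x, y₂)‖ ≤ K * ‖y₁ - y₂‖ :=
    fun x _ => by
      rw [← dist_eq_norm, ← dist_eq_norm]
      simpa [Prod.dist_eq] using (lipschitzWith_fderivFst hf').dist_le_mul (x, y₁) (x, y₂)
  exact convex_univ.norm_image_sub_le_of_norm_hasFDerivWithin_le hderiv hbound trivial trivial

theorem hasFDerivAt_of_norm_sub_sub_le_sq {g : E → G} {g' : E →L[ℝ] G} {x : E} (C : ℝ)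
    (hg : ∀ u, ‖g (x + u) - g x - g' u‖ ≤ C * ‖u‖ ^ 2) : HasFDerivAt g g' x := by
  rw [hasFDerivAt_iff_isLittleO_nhds_zero]
  refine (Asymptotics.isBigO_of_le' (c := C) (𝓝 0) fun u => ?_).trans_isLittleO
    (Asymptotics.isLittleO_norm_pow_id one_lt_two)
  simpa using hg u

end Partial

section StrongConcavity

variable {F : Type*} [NormedAddCommGroup F] [NormedSpace ℝ F]

theorem StrongConcaveOn.add_sq_le_of_isMaxOn {Y : Set F} {φ : F → ℝ} {μ : ℝ} {y₀ y : F}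
    (hφ : StrongConcaveOn Y μ φ) (hy₀ : y₀ ∈ Y) (hmax : IsMaxOn φ Y y₀) (hy : y ∈ Y) :
    φ y + μ / 2 * ‖y - y₀‖ ^ 2 ≤ φ y₀ := by
  have hsegment : ∀ t ∈ Set.Ioo (0 : ℝ) 1, φ y - φ y₀ + (1 - t) * (μ / 2 * ‖y - y₀‖ ^ 2) ≤ 0 := by
    rintro t ⟨ht₀, ht₁⟩
    have hconc := hφ.2 hy₀ hy (sub_nonneg.2 ht₁.le) ht₀.le (sub_add_cancel 1 t)
    have hle := isMaxOn_iff.1 hmax _ (hφ.1 hy₀ hy (sub_nonneg.2 ht₁.le) ht₀.le (sub_add_cancel 1 t))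
    rw [norm_sub_rev, smul_eq_mul, smul_eq_mul] at hconc
    refine nonpos_of_mul_nonpos_right ?_ ht₀
    linear_combination hconc + hle
  have hlim : Tendsto (fun t : ℝ => φ y - φ y₀ + (1 - t) * (μ / 2 * ‖y - y₀‖ ^ 2)) (𝓝[>] 0)
      (𝓝 (φ y - φ y₀ + μ / 2 * ‖y - y₀‖ ^ 2)) := by
    refine Tendsto.mono_left ?_ nhdsWithin_le_nhds
    simpa using (by fun_prop : Continuous fun t : ℝ =>
      φ y - φ y₀ + (1 - t) * (μ / 2 * ‖y - y₀‖ ^ 2)).tendsto 0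
  have := le_of_tendsto hlim (by filter_upwards [Ioo_mem_nhdsGT one_pos] using hsegment)
  linarith

end StrongConcavity

section Maximizer

variable {E F : Type*} [NormedAddCommGroup E] [NormedSpace ℝ E]
  [NormedAddCommGroup F] [NormedSpace ℝ F]
  {f : E × F → ℝ} {h : F → ℝ} {Y : Set F} {ystar : E → F} {K : ℝ≥0}

theorem lipschitzWith_of_isMaxOn_strongConcaveOn {μ : ℝ} (hμ : 0 < μ)
    (hf : Differentiable ℝ f) (hf' : LipschitzWith K (fderiv ℝ f))
    (hconc : ∀ x, StrongConcaveOn Y μ fun y => f (x, y) - h y) (hmem : ∀ x, ystar x ∈ Y)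
    (hmax : ∀ x, IsMaxOn (fun y => f (x, y) - h y) Y (ystar x)) :
    LipschitzWith (K / μ.toNNReal) ystar := by
  refine LipschitzWith.of_dist_le_mul fun x₁ x₂ => ?_
  rw [NNReal.coe_div, Real.coe_toNNReal _ hμ.le, dist_eq_norm, dist_eq_norm]
  have h₁ := (hconc x₁).add_sq_le_of_isMaxOn (hmem x₁) (hmax x₁) (hmem x₂)
  have h₂ := (hconc x₂).add_sq_le_of_isMaxOn (hmem x₂) (hmax x₂) (hmem x₁)
  have hcross := (abs_le.1 (norm_sub_sub_sub_le_of_lipschitzWith_fderiv hf hf' x₁ x₂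
    (ystar x₁) (ystar x₂))).2
  rw [norm_sub_rev (ystar x₂)] at h₁
  have hsq : μ * ‖ystar x₁ - ystar x₂‖ ^ 2 ≤ K * ‖ystar x₁ - ystar x₂‖ * ‖x₁ - x₂‖ := by
    linarith
  rcases (norm_nonneg (ystar x₁ - ystar x₂)).eq_or_lt with hzero | hpos
  · rw [← hzero]; positivity
  · rw [div_mul_eq_mul_div, le_div_iff₀ hμ]
    nlinarith

theorem hasFDerivAt_of_isMaxOn {Ky : ℝ≥0} (hf : Differentiable ℝ f)
    (hf' : LipschitzWith K (fderiv ℝ f)) (hy : LipschitzWith Ky ystar) (hmem : ∀ x, ystar x ∈ Y)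
    (hmax : ∀ x, IsMaxOn (fun y => f (x, y) - h y) Y (ystar x)) (x : E) :
    HasFDerivAt (fun x => f (x, ystar x) - h (ystar x)) (fderivFst f (x, ystar x)) x := by
  refine hasFDerivAt_of_norm_sub_sub_le_sq (K * (1 + Ky)) fun u => ?_
  have htaylor := abs_le.1 <| norm_sub_sub_le_of_lipschitzWith_fderiv
    (fun x' => hasFDerivAt_fderivFst (hf (x', ystar x)))
    ((lipschitzWith_fderivFst hf').comp (LipschitzWith.prodMk_right (ystar x))) x u
  have hcross := (abs_le.1 <| norm_sub_sub_sub_le_of_lipschitzWith_fderiv hf hf' (x + u) x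
    (ystar (x + u)) (ystar x)).2
  have hymove : ‖ystar (x + u) - ystar x‖ ≤ Ky * ‖u‖ := by
    simpa [dist_eq_norm] using hy.dist_le_mul (x + u) x
  have hmax₁ := isMaxOn_iff.1 (hmax (x + u)) (ystar x) (hmem x)
  have hmax₂ := isMaxOn_iff.1 (hmax x) (ystar (x + u)) (hmem (x + u))
  rw [add_sub_cancel_left] at hcross
  rw [NNReal.coe_mul, NNReal.coe_one, mul_one] at htaylor
  have hcross' : K * ‖ystar (x + u) - ystar x‖ * ‖u‖ ≤ K * Ky * ‖u‖ ^ 2 := by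
    calc _ ≤ K * (Ky * ‖u‖) * ‖u‖ := by gcongr
      _ = K * Ky * ‖u‖ ^ 2 := by ring
  have hK : 0 ≤ K * Ky * ‖u‖ ^ 2 := by positivity
  rw [Real.norm_eq_abs, abs_le]
  constructor <;> linarith

end Maximizer

theorem Phi_smooth_general (m n : ℕ) (L μ : ℝ) (hL : 0 ≤ L) (hμ : 0 < μ)
    (f : (EuclideanSpace ℝ (Fin m)) × (EuclideanSpace ℝ (Fin n)) → ℝ)
    (Y : Set (EuclideanSpace ℝ (Fin n)))
    (hYconv : Convex ℝ Y)
    (h : EuclideanSpace ℝ (Fin n) → ℝ) (hconv : ConvexOn ℝ Set.univ h)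
    (hdiff : Differentiable ℝ f)
    (hsmooth : LipschitzWith L.toNNReal (fderiv ℝ f))
    (hconc : ∀ x, ConcaveOn ℝ Y (fun y => f (x, y) + (μ / 2) * ‖y‖ ^ 2))
    (ystar : EuclideanSpace ℝ (Fin m) → EuclideanSpace ℝ (Fin n))
    (hmem : ∀ x, ystar x ∈ Y)
    (hmax : ∀ x, ∀ y ∈ Y, f (x, y) - h y ≤ f (x, ystar x) - h (ystar x))
    (Φ : EuclideanSpace ℝ (Fin m) → ℝ)
    (hΦ : ∀ x, Φ x = f (x, ystar x) - h (ystar x)) :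
    (∀ x, HasFDerivAt Φ (fderiv ℝ (fun x' => f (x', ystar x)) x) x) ∧
      LipschitzWith (L * (1 + L / μ)).toNNReal
        (fun x => fderiv ℝ (fun x' => f (x', ystar x)) x) := by
  have hstrong : ∀ x, StrongConcaveOn Y μ fun y => f (x, y) - h y := fun x =>
    strongConcaveOn_iff_convex.2 <|
      ((hconc x).sub (hconv.subset (Set.subset_univ Y) hYconv)).congr fun y _ =>
        (sub_add_eq_add_sub _ _ _).symm
  have hmax' : ∀ x, IsMaxOn (fun y => f (x, y) - h y) Y (ystar x) := hmax
  have hystar := lipschitzWith_of_isMaxOn_strongConcaveOn hμ hdiff hsmooth hstrong hmem hmax'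
  have hpartial : (fun x => fderiv ℝ (fun x' => f (x', ystar x)) x) =
      fun x => fderivFst f (x, ystar x) :=
    funext fun x => (hasFDerivAt_fderivFst (hdiff _)).fderiv
  have hΦeq : Φ = fun x => f (x, ystar x) - h (ystar x) := funext hΦ
  refine ⟨fun x => ?_, ?_⟩
  · rw [congrFun hpartial x, hΦeq]
    exact hasFDerivAt_of_isMaxOn hdiff hsmooth hystar hmem hmax' x
  · rw [hpartial]
    refine ((lipschitzWith_fderivFst hsmooth).comp (LipschitzWith.id.prodMk hystar)).weaken ?_
    rw [Real.toNNReal_mul hL, Real.toNNReal_add zero_le_one (div_nonneg hL hμ.le),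
      Real.toNNReal_div hL, Real.toNNReal_one]
    gcongr
    exact max_le le_self_add le_add_self

/-- Under the same assumptions (f L-smooth, f(x,·) μ-strongly concave, h convex,
Y compact convex), the function `Φ x = max_{y ∈ Y} (f (x,y) - h y)` is differentiable with
`∇Φ(x) = ∇₁ f (x, ystar x)`, and `∇Φ` is `L * (1 + κ)`-Lipschitz, where `κ = L / μ`. -/
theorem Phi_smooth (m n : ℕ) (L μ : ℝ) (hL : 0 ≤ L) (hμ : 0 < μ)
    (f : (EuclideanSpace ℝ (Fin m)) × (EuclideanSpace ℝ (Fin n)) → ℝ)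
    (Y : Set (EuclideanSpace ℝ (Fin n))) (hYne : Y.Nonempty)
    (hYconv : Convex ℝ Y) (hYcpt : IsCompact Y)
    (h : EuclideanSpace ℝ (Fin n) → ℝ) (hconv : ConvexOn ℝ Set.univ h)
    (hdiff : Differentiable ℝ f)
    (hsmooth : LipschitzWith L.toNNReal (fderiv ℝ f))
    (hconc : ∀ x, ConcaveOn ℝ Y (fun y => f (x, y) + (μ / 2) * ‖y‖ ^ 2))
    (ystar : EuclideanSpace ℝ (Fin m) → EuclideanSpace ℝ (Fin n))
    (hmem : ∀ x, ystar x ∈ Y)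
    (hmax : ∀ x, ∀ y ∈ Y, f (x, y) - h y ≤ f (x, ystar x) - h (ystar x))
    (Φ : EuclideanSpace ℝ (Fin m) → ℝ)
    (hΦ : ∀ x, Φ x = f (x, ystar x) - h (ystar x)) :
    (∀ x, HasFDerivAt Φ (fderiv ℝ (fun x' => f (x', ystar x)) x) x) ∧
      LipschitzWith (L * (1 + L / μ)).toNNReal
        (fun x => fderiv ℝ (fun x' => f (x', ystar x)) x) :=
  Phi_smooth_general m n L μ hL hμ f Y hYconv h hconv hdiff hsmooth hconc ystar hmem hmax Φ hΦ
end

section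
/- Let θ ∈ (0, 1/2) and let (d_t)_{t≥t₀} be a positive nonincreasing sequence satisfying d_{t-1} − d_t ≥ (1/(2Mc²)) d_t^{2(1−θ)} for all t > t₀, where M, c > 0. Define C = min{ (1−2θ)/(8Mc²), d_{t₀}^{−(1−2θ)}(1 − 2^{−(1−2θ)}) } > 0. Then for all t ≥ t₀, d_t ≤ (C(t−t₀))^{−1/(1−2θ)}. -/
/-!
With `α = 1 - 2θ`, the quantity `d t ^ (-α)` grows by at least `C` at every step, so it is at
least `C (t - t₀)` and inverting gives the rate. For the per-step increment: if `d (t-1) ≤ 2 d t`,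
the tangent-line bound for the convex function `s ↦ s ^ (-α)` at `d (t-1)` together with the
recursion gives an increment `≥ α / (8 M c²)`; if `d (t-1) > 2 d t`, then
`d (t-1) ^ (-α) ≤ 2 ^ (-α) d t ^ (-α)`, so the increment is `≥ (1 - 2 ^ (-α)) d t₀ ^ (-α)`.
-/

open Real

theorem one_add_mul_one_sub_le_rpow_neg {r α : ℝ} (hr : 0 < r) (hα : 0 ≤ α) :
    1 + α * (1 - r) ≤ r ^ (-α) :=
  calc 1 + α * (1 - r) ≤ log r * -α + 1 := by nlinarith [log_le_sub_one_of_pos hr]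
    _ ≤ exp (log r * -α) := add_one_le_exp _
    _ = r ^ (-α) := (rpow_def_of_pos hr _).symm

theorem mul_rpow_neg_mul_sub_le_rpow_neg_sub {x y α : ℝ} (hx : 0 < x) (hy : 0 < y)
    (hα : 0 ≤ α) : α * y ^ (-(1 + α)) * (y - x) ≤ x ^ (-α) - y ^ (-α) := by
  have hyα : 0 < y ^ (-α) := rpow_pos_of_pos hy _
  have key := mul_le_mul_of_nonneg_left (one_add_mul_one_sub_le_rpow_neg (div_pos hx hy) hα)
    hyα.le
  rw [div_rpow hx.le hy.le, mul_div_cancel₀ _ hyα.ne'] at key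
  have hexp : y ^ (-(1 + α)) = y ^ (-α) / y := by
    rw [show -(1 + α) = -α - 1 by ring, rpow_sub hy, rpow_one]
  rw [hexp]
  calc α * (y ^ (-α) / y) * (y - x) = y ^ (-α) * (1 + α * (1 - x / y)) - y ^ (-α) := by
        field_simp; ring
    _ ≤ x ^ (-α) - y ^ (-α) := by linarith

theorem mul_div_four_le_rpow_neg_sub_of_le_two_mul {a b K α : ℝ} (ha : 0 < a) (hb : b ≤ 2 * a)
    (hK : 0 ≤ K) (hα0 : 0 ≤ α) (hα1 : α ≤ 1) (hrec : K * a ^ (1 + α) ≤ b - a) :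
    α * K / 4 ≤ a ^ (-α) - b ^ (-α) := by
  have hb0 : 0 < b := by nlinarith [rpow_pos_of_pos ha (1 + α)]
  have hratio : 1 / 4 ≤ (a / b) ^ (1 + α) :=
    calc (1 / 4 : ℝ) = (1 / 2) ^ (2 : ℝ) := by norm_num
      _ ≤ (1 / 2) ^ (1 + α) := rpow_le_rpow_of_exponent_ge (by norm_num) (by norm_num)
          (by linarith)
      _ ≤ (a / b) ^ (1 + α) := rpow_le_rpow (by norm_num)
          (by rw [le_div_iff₀ hb0]; linarith) (by linarith)
  calc α * K / 4 ≤ α * K * (a / b) ^ (1 + α) := by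
        rw [div_eq_mul_one_div (α * K)]; gcongr
    _ = α * b ^ (-(1 + α)) * (K * a ^ (1 + α)) := by
        rw [div_rpow ha.le hb0.le, rpow_neg hb0.le]; ring
    _ ≤ α * b ^ (-(1 + α)) * (b - a) := by gcongr
    _ ≤ a ^ (-α) - b ^ (-α) := mul_rpow_neg_mul_sub_le_rpow_neg_sub ha hb0 hα0

theorem rpow_neg_mul_one_sub_le_rpow_neg_sub_of_two_mul_le {a b α : ℝ} (ha : 0 < a)
    (hb : 2 * a ≤ b) (hα : 0 ≤ α) : a ^ (-α) * (1 - 2 ^ (-α)) ≤ a ^ (-α) - b ^ (-α) := by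
  have : b ^ (-α) ≤ 2 ^ (-α) * a ^ (-α) :=
    calc b ^ (-α) ≤ (2 * a) ^ (-α) := rpow_le_rpow_of_nonpos (by positivity) hb (by linarith)
      _ = 2 ^ (-α) * a ^ (-α) := mul_rpow (by norm_num) ha.le
  linarith

theorem min_le_rpow_neg_sub {a a₀ b K α : ℝ} (ha : 0 < a) (ha₀ : a ≤ a₀) (hK : 0 ≤ K)
    (hα0 : 0 ≤ α) (hα1 : α ≤ 1) (hrec : K * a ^ (1 + α) ≤ b - a) :
    min (α * K / 4) (a₀ ^ (-α) * (1 - 2 ^ (-α))) ≤ a ^ (-α) - b ^ (-α) := by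
  rcases le_or_gt b (2 * a) with hb | hb
  · exact (min_le_left _ _).trans
      (mul_div_four_le_rpow_neg_sub_of_le_two_mul ha hb hK hα0 hα1 hrec)
  · have h2 : 0 ≤ 1 - (2 : ℝ) ^ (-α) := by
      linarith [rpow_le_one_of_one_le_of_nonpos one_le_two (neg_nonpos.mpr hα0)]
    calc min (α * K / 4) (a₀ ^ (-α) * (1 - 2 ^ (-α))) ≤ a₀ ^ (-α) * (1 - 2 ^ (-α)) :=
          min_le_right _ _
      _ ≤ a ^ (-α) * (1 - 2 ^ (-α)) :=
          mul_le_mul_of_nonneg_right (rpow_le_rpow_of_nonpos ha ha₀ (neg_nonpos.mpr hα0)) h2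
      _ ≤ a ^ (-α) - b ^ (-α) := rpow_neg_mul_one_sub_le_rpow_neg_sub_of_two_mul_le ha hb.le hα0

theorem add_mul_sub_le_of_le_sub {g : ℕ → ℝ} {C : ℝ} {t₀ : ℕ}
    (h : ∀ t > t₀, C ≤ g t - g (t - 1)) {t : ℕ} (ht : t₀ ≤ t) :
    g t₀ + C * ((t : ℝ) - t₀) ≤ g t := by
  induction t, ht using Nat.le_induction with
  | base => simp
  | succ n hn ih =>
    have hstep := h (n + 1) (by omega)
    rw [Nat.add_sub_cancel] at hstep
    push_cast
    linarith

/-- sublinear KŁ rate for `θ ∈ (0, 1/2)`. If a positive sequence, nonincreasing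
from `t₀` on, satisfies `d (t-1) - d t ≥ (1/(2Mc²)) d t ^ (2(1-θ))` for `t > t₀`, then with
`C = min ((1-2θ)/(8Mc²)) (d t₀ ^ (-(1-2θ)) * (1 - 2 ^ (-(1-2θ))))` we have `C > 0` and
`d t ≤ (C (t - t₀)) ^ (-1/(1-2θ))` for all `t > t₀`. -/
theorem sublinear_convergence (θ M c : ℝ) (hθ : θ ∈ Set.Ioo (0 : ℝ) (1/2))
    (hM : 0 < M) (hc : 0 < c) (t₀ : ℕ) (d : ℕ → ℝ)
    (hpos : ∀ t ≥ t₀, 0 < d t)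
    (hmono : ∀ s t, t₀ ≤ s → s ≤ t → d t ≤ d s)
    (hrec : ∀ t > t₀, 1 / (2 * M * c ^ 2) * d t ^ (2 * (1 - θ)) ≤ d (t - 1) - d t) :
    0 < min ((1 - 2 * θ) / (8 * M * c ^ 2))
        (d t₀ ^ (-(1 - 2 * θ)) * (1 - (2 : ℝ) ^ (-(1 - 2 * θ)))) ∧
    ∀ t > t₀, d t ≤
      (min ((1 - 2 * θ) / (8 * M * c ^ 2))
          (d t₀ ^ (-(1 - 2 * θ)) * (1 - (2 : ℝ) ^ (-(1 - 2 * θ)))) *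
        ((t : ℝ) - (t₀ : ℝ))) ^ (-(1 / (1 - 2 * θ))) := by
  obtain ⟨hθ0, hθ1⟩ := hθ
  set α := 1 - 2 * θ
  have hα0 : 0 < α := by linarith
  have hd₀ : 0 < d t₀ := hpos t₀ le_rfl
  have hC : 0 < min (α / (8 * M * c ^ 2)) (d t₀ ^ (-α) * (1 - 2 ^ (-α))) :=
    lt_min (by positivity) (mul_pos (rpow_pos_of_pos hd₀ _)
      (sub_pos.mpr (rpow_lt_one_of_one_lt_of_neg one_lt_two (neg_lt_zero.mpr hα0))))
  have hstep : ∀ t > t₀, min (α / (8 * M * c ^ 2)) (d t₀ ^ (-α) * (1 - 2 ^ (-α))) ≤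
      d t ^ (-α) - d (t - 1) ^ (-α) := by
    intro t ht
    have hK : α / (8 * M * c ^ 2) = α * (1 / (2 * M * c ^ 2)) / 4 := by field_simp; ring
    have hexp : 2 * (1 - θ) = 1 + α := by ring
    rw [hK]
    exact min_le_rpow_neg_sub (hpos t ht.le) (hmono t₀ t le_rfl ht.le) (by positivity) hα0.le
      (by linarith) (hexp ▸ hrec t ht)
  refine ⟨hC, fun t ht => ?_⟩
  have hgrowth := add_mul_sub_le_of_le_sub hstep ht.le
  have htpos : (0 : ℝ) < t - t₀ := sub_pos.mpr (Nat.cast_lt.mpr ht)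
  rw [show -(1 / α) = (-α)⁻¹ by rw [one_div, neg_inv],
    le_rpow_inv_iff_of_neg (hpos t ht.le) (mul_pos hC htpos) (neg_lt_zero.mpr hα0)]
  linarith [rpow_pos_of_pos hd₀ (-α)]
end

section
/- Let Φ: ℝ^m → ℝ be differentiable with L_Φ-Lipschitz gradient, g: ℝ^m → ℝ ∪ {+∞} proper, and let x⁺ ∈ argmin_u { g(u) + (1/(2η))‖u − x + η w‖² } for some vector w ∈ ℝ^m and step η > 0. Then Φ(x⁺) + g(x⁺) ≤ Φ(x) + g(x) − (1/(2η) − L_Φ/2)‖x⁺ − x‖² + ‖x⁺ − x‖·‖∇Φ(x) − w‖. -/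
/-!
Combine the descent lemma `Φ x⁺ ≤ Φ x + ⟪∇Φ x, x⁺ - x⟫ + L_Φ/2 ‖x⁺ - x‖²` with the optimality of
`x⁺` tested against `u = x`; after expanding the square, the two differ by `⟪x⁺ - x, ∇Φ x - w⟫`,
which Cauchy–Schwarz bounds. The quadratic terms are real, so they cancel in `EReal` whatever
the values of `g`.
-/

open Real Filter Topology

open scoped NNReal RealInnerProductSpace Gradient

section InnerProductSpace

variable {F : Type*} [NormedAddCommGroup F] [InnerProductSpace ℝ F]

theorem one_div_two_mul_mul_norm_add_smul_sq (d w : F) {η : ℝ} (hη : η ≠ 0) :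
    1 / (2 * η) * ‖d + η • w‖ ^ 2 = 1 / (2 * η) * ‖d‖ ^ 2 + ⟪d, w⟫ + 1 / (2 * η) * ‖η • w‖ ^ 2 := by
  rw [norm_add_sq_real, real_inner_smul_right]
  field_simp

variable [CompleteSpace F] {f : F → ℝ} {K : ℝ≥0}

theorem HasGradientAt.hasDerivAt_comp_add_smul {x v f' : F} {t : ℝ}
    (hf : HasGradientAt f f' (x + t • v)) :
    HasDerivAt (fun s : ℝ => f (x + s • v)) ⟪f', v⟫ t := by
  have hline : HasDerivAt (fun s : ℝ => x + s • v) v t := by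
    simpa using ((hasDerivAt_id t).smul_const v).const_add x
  exact hf.hasFDerivAt.comp_hasDerivAt t hline

theorem LipschitzWith.inner_gradient_add_smul_le (hlip : LipschitzWith K (∇ f)) (x v : F)
    {t : ℝ} (ht : 0 ≤ t) :
    ⟪∇ f (x + t • v), v⟫ ≤ ⟪∇ f x, v⟫ + K * t * ‖v‖ ^ 2 := by
  have hdist : ‖∇ f (x + t • v) - ∇ f x‖ ≤ K * (t * ‖v‖) := by
    simpa [dist_eq_norm, norm_smul, abs_of_nonneg ht] using hlip.dist_le_mul (x + t • v) x
  calc ⟪∇ f (x + t • v), v⟫ = ⟪∇ f x, v⟫ + ⟪∇ f (x + t • v) - ∇ f x, v⟫ := by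
        rw [inner_sub_left]; ring
    _ ≤ ⟪∇ f x, v⟫ + ‖∇ f (x + t • v) - ∇ f x‖ * ‖v‖ := by
        gcongr; exact real_inner_le_norm _ _
    _ ≤ ⟪∇ f x, v⟫ + K * (t * ‖v‖) * ‖v‖ := by gcongr
    _ = ⟪∇ f x, v⟫ + K * t * ‖v‖ ^ 2 := by ring

theorem LipschitzWith.le_add_inner_gradient_add_sq (hf : Differentiable ℝ f)
    (hlip : LipschitzWith K (∇ f)) (x y : F) :
    f y ≤ f x + ⟪∇ f x, y - x⟫ + K / 2 * ‖y - x‖ ^ 2 := by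
  set v := y - x
  -- `s ↦ f (x + s • v)` stays below its quadratic majorant on `[0, 1]`, since they agree at `0`
  -- and Lipschitz continuity of `∇ f` orders their derivatives.
  have hφ (t : ℝ) : HasDerivAt (fun s : ℝ => f (x + s • v)) ⟪∇ f (x + t • v), v⟫ t :=
    (hf _).hasGradientAt.hasDerivAt_comp_add_smul
  have hB (t : ℝ) : HasDerivAt (fun s : ℝ => f x + s * ⟪∇ f x, v⟫ + K / 2 * s ^ 2 * ‖v‖ ^ 2)
      (⟪∇ f x, v⟫ + K * t * ‖v‖ ^ 2) t := by
    have hlin : HasDerivAt (fun s : ℝ => s * ⟪∇ f x, v⟫) ⟪∇ f x, v⟫ t := by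
      simpa using (hasDerivAt_id t).mul_const ⟪∇ f x, v⟫
    have hquad : HasDerivAt (fun s : ℝ => K / 2 * s ^ 2 * ‖v‖ ^ 2) (K * t * ‖v‖ ^ 2) t := by
      refine (((hasDerivAt_pow 2 t).const_mul ((K : ℝ) / 2)).mul_const (‖v‖ ^ 2)).congr_deriv ?_
      ring
    exact (hlin.const_add (f x)).add hquad
  have key := image_le_of_deriv_right_le_deriv_boundary
    (fun t _ => (hφ t).continuousAt.continuousWithinAt) (fun t _ => (hφ t).hasDerivWithinAt)
    (by simp) (fun t _ => (hB t).continuousAt.continuousWithinAt)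
    (fun t _ => (hB t).hasDerivWithinAt)
    (fun t ht => hlip.inner_gradient_add_smul_le x v ht.1) (Set.right_mem_Icc.2 zero_le_one)
  simpa [v] using key

end InnerProductSpace

namespace EReal

theorem coe_add_le_coe_add_of_add_coe_le {a b : EReal} {p q r s : ℝ} (h : a + r ≤ b + s)
    (hpq : p + s ≤ q + r) : (p : EReal) + a ≤ q + b := by
  refine (addLECancellable_coe r).add_le_add_iff_right.1 ?_
  calc (p : EReal) + a + r = p + (a + r) := add_assoc _ _ _
    _ ≤ p + (b + s) := by gcongr
    _ = ((p + s : ℝ) : EReal) + b := by rw [coe_add]; ac_rfl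
    _ ≤ ((q + r : ℝ) : EReal) + b := by gcongr
    _ = q + b + r := by rw [coe_add]; ac_rfl

end EReal

theorem inexact_prox_descent_general (m : ℕ) (LΦ η : ℝ) (hLΦ : 0 ≤ LΦ) (hη : 0 < η)
    (Φ : EuclideanSpace ℝ (Fin m) → ℝ) (hdiff : Differentiable ℝ Φ)
    (hlip : LipschitzWith LΦ.toNNReal (gradient Φ))
    (g : EuclideanSpace ℝ (Fin m) → EReal)
    (w x xp : EuclideanSpace ℝ (Fin m))
    (hprox : ∀ u, g xp + (((1 / (2 * η)) * ‖xp - x + η • w‖ ^ 2 : ℝ) : EReal) ≤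
        g u + (((1 / (2 * η)) * ‖u - x + η • w‖ ^ 2 : ℝ) : EReal)) :
    (Φ xp : EReal) + g xp ≤
      ((Φ x - (1 / (2 * η) - LΦ / 2) * ‖xp - x‖ ^ 2 +
          ‖xp - x‖ * ‖gradient Φ x - w‖ : ℝ) : EReal) + g x := by
  refine EReal.coe_add_le_coe_add_of_add_coe_le (hprox x) ?_
  have hdescent := hlip.le_add_inner_gradient_add_sq hdiff x xp
  rw [Real.coe_toNNReal _ hLΦ, real_inner_comm] at hdescent
  have hcs := real_inner_le_norm (xp - x) (gradient Φ x - w)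
  rw [inner_sub_right] at hcs
  rw [sub_self, zero_add, one_div_two_mul_mul_norm_add_smul_sq _ _ hη.ne']
  linarith

/-- inexact proximal gradient descent inequality. If `Φ` is differentiable with
`L_Φ`-Lipschitz gradient, `g : ℝ^m → ℝ ∪ {+∞}` is proper, and
`x⁺ ∈ argmin_u { g u + (1/(2η)) ‖u - x + η w‖² }`, then
`Φ x⁺ + g x⁺ ≤ Φ x + g x - (1/(2η) - L_Φ/2) ‖x⁺ - x‖² + ‖x⁺ - x‖ ‖∇Φ x - w‖`. -/
theorem inexact_prox_descent (m : ℕ) (LΦ η : ℝ) (hLΦ : 0 ≤ LΦ) (hη : 0 < η)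
    (Φ : EuclideanSpace ℝ (Fin m) → ℝ) (hdiff : Differentiable ℝ Φ)
    (hlip : LipschitzWith LΦ.toNNReal (gradient Φ))
    (g : EuclideanSpace ℝ (Fin m) → EReal)
    (hproper : ∃ u, g u ≠ ⊤) (hnebot : ∀ u, g u ≠ ⊥)
    (w x xp : EuclideanSpace ℝ (Fin m))
    (hprox : ∀ u, g xp + (((1 / (2 * η)) * ‖xp - x + η • w‖ ^ 2 : ℝ) : EReal) ≤
        g u + (((1 / (2 * η)) * ‖u - x + η • w‖ ^ 2 : ℝ) : EReal)) :
    (Φ xp : EReal) + g xp ≤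
      ((Φ x - (1 / (2 * η) - LΦ / 2) * ‖xp - x‖ ^ 2 +
          ‖xp - x‖ * ‖gradient Φ x - w‖ : ℝ) : EReal) + g x :=
  inexact_prox_descent_general m LΦ η hLΦ hη Φ hdiff hlip g w x xp hprox
end

section
/- Let (S_t)_{t≥t₀} be a nonnegative sequence satisfying S_t ≤ b·(t − t₀)^{−p} + (1/2)S_{t−1} for all t > t₀, where b ≥ 0 and p > 0. Then S_t ≤ O((t − t₀)^{−p}); explicitly, S_t ≤ 2^{t₀−t}S_{t₀} + (b/2^{t−t₀})∑_{s=1}^{t−t₀} 2^{s} s^{−p}, and the last sum is bounded by 2^{t₁+1} + 2^{t−t₀+1}((t−t₀)/2)^{−p} with t₁ = ⌊(t−t₀)/2⌋. -/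
open Real

/-! Multiplying the recursion by `2 ^ k` makes it telescope, which gives the explicit bound.
In the resulting sum `∑_{s ≤ n} 2 ^ s s ^ (-p)`, the terms with `s ≤ n / 2` are at most `2 ^ s`,
and those with `s > n / 2` at most `2 ^ s (n / 2) ^ (-p)`; each half is then a geometric sum. -/

lemma pow_mul_le_add_sum_of_le_add_div {r : ℝ} (hr : 0 < r) {u f : ℕ → ℝ}
    (h : ∀ k, u (k + 1) ≤ f (k + 1) + u k / r) (k : ℕ) :
    r ^ k * u k ≤ u 0 + ∑ s ∈ Finset.Icc 1 k, r ^ s * f s := by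
  induction k with
  | zero => simp
  | succ k ih =>
    have hstep : r ^ (k + 1) * u (k + 1) ≤ r ^ (k + 1) * f (k + 1) + r ^ k * u k := by
      calc r ^ (k + 1) * u (k + 1) ≤ r ^ (k + 1) * (f (k + 1) + u k / r) := by
            gcongr; exact h k
        _ = r ^ (k + 1) * f (k + 1) + r ^ k * u k := by
            field_simp; ring
    rw [Finset.sum_Icc_succ_top (by omega)]
    linarith

lemma sum_two_pow_le_of_forall_le {s : Finset ℕ} {m : ℕ} (hs : ∀ i ∈ s, i ≤ m) :
    ∑ i ∈ s, (2 : ℝ) ^ i ≤ 2 ^ (m + 1) := by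
  exact_mod_cast (Nat.geomSum_lt le_rfl fun i hi ↦ Nat.lt_succ_of_le (hs i hi)).le

lemma sum_Ioc_two_pow_mul_rpow_neg_le {p : ℝ} (hp : 0 ≤ p) (a m : ℕ) :
    ∑ s ∈ Finset.Ioc a m, (2 : ℝ) ^ s * (s : ℝ) ^ (-p) ≤ 2 ^ (m + 1) * ((a : ℝ) + 1) ^ (-p) := by
  calc ∑ s ∈ Finset.Ioc a m, (2 : ℝ) ^ s * (s : ℝ) ^ (-p)
      ≤ ∑ s ∈ Finset.Ioc a m, (2 : ℝ) ^ s * ((a : ℝ) + 1) ^ (-p) := by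
        refine Finset.sum_le_sum fun s hs ↦ ?_
        have has : (a : ℝ) + 1 ≤ s := by exact_mod_cast (Finset.mem_Ioc.mp hs).1
        exact mul_le_mul_of_nonneg_left
          (rpow_le_rpow_of_nonpos (by positivity) has (neg_nonpos.mpr hp)) (by positivity)
    _ = (∑ s ∈ Finset.Ioc a m, (2 : ℝ) ^ s) * ((a : ℝ) + 1) ^ (-p) := by
        rw [Finset.sum_mul]
    _ ≤ 2 ^ (m + 1) * ((a : ℝ) + 1) ^ (-p) := by
        gcongr
        exact sum_two_pow_le_of_forall_le fun s hs ↦ (Finset.mem_Ioc.mp hs).2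

lemma sum_Icc_two_pow_mul_rpow_neg_le {p : ℝ} (hp : 0 ≤ p) (n : ℕ) :
    ∑ s ∈ Finset.Icc 1 n, (2 : ℝ) ^ s * (s : ℝ) ^ (-p) ≤
      2 ^ (n / 2 + 1) + 2 ^ (n + 1) * ((n : ℝ) / 2) ^ (-p) := by
  rcases Nat.eq_zero_or_pos n with rfl | hn
  · simp only [Finset.Icc_eq_empty_of_lt one_pos, Finset.sum_empty]
    positivity
  have hIcc : Finset.Icc 1 n = Finset.Ioc 0 n := by
    ext s; simp only [Finset.mem_Icc, Finset.mem_Ioc]; omega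
  rw [hIcc, ← Finset.sum_Ioc_consecutive _ (Nat.zero_le (n / 2)) (Nat.div_le_self n 2)]
  have hlow := sum_Ioc_two_pow_mul_rpow_neg_le hp 0 (n / 2)
  have hhigh := sum_Ioc_two_pow_mul_rpow_neg_le hp (n / 2) n
  have hhalf : ((n / 2 : ℕ) + 1 : ℝ) ^ (-p) ≤ ((n : ℝ) / 2) ^ (-p) := by
    refine rpow_le_rpow_of_nonpos (by positivity) ?_ (neg_nonpos.mpr hp)
    have : n < 2 * (n / 2 + 1) := by omega
    have : (n : ℝ) < 2 * ((n / 2 : ℕ) + 1) := by exact_mod_cast this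
    linarith
  simp only [Nat.cast_zero, zero_add, one_rpow, mul_one] at hlow
  calc _ ≤ 2 ^ (n / 2 + 1) + 2 ^ (n + 1) * (((n / 2 : ℕ) : ℝ) + 1) ^ (-p) := add_le_add hlow hhigh
    _ ≤ _ := by gcongr

theorem sublinear_tail_recursion_general (t₀ : ℕ) (S : ℕ → ℝ)
    (b p : ℝ) (hp : 0 < p)
    (hrec : ∀ t > t₀, S t ≤ b * ((t : ℝ) - (t₀ : ℝ)) ^ (-p) + (1 / 2) * S (t - 1)) :
    (∀ t > t₀, S t ≤ S t₀ / 2 ^ (t - t₀) +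
        (b / 2 ^ (t - t₀)) * ∑ s ∈ Finset.Icc 1 (t - t₀), (2 : ℝ) ^ s * (s : ℝ) ^ (-p)) ∧
      (∀ t > t₀, ∑ s ∈ Finset.Icc 1 (t - t₀), (2 : ℝ) ^ s * (s : ℝ) ^ (-p) ≤
        (2 : ℝ) ^ ((t - t₀) / 2 + 1) +
          (2 : ℝ) ^ (t - t₀ + 1) * (((t : ℝ) - (t₀ : ℝ)) / 2) ^ (-p)) := by
  refine ⟨fun t ht ↦ ?_, fun t ht ↦ ?_⟩
  · obtain ⟨k, rfl⟩ := Nat.exists_eq_add_of_lt ht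
    have hshift : ∀ j, S (t₀ + (j + 1)) ≤ b * ((j + 1 : ℕ) : ℝ) ^ (-p) + S (t₀ + j) / 2 := by
      intro j
      have := hrec (t₀ + (j + 1)) (by omega)
      rw [show t₀ + (j + 1) - 1 = t₀ + j by omega, Nat.cast_add, add_sub_cancel_left] at this
      linarith
    have hunrolled := pow_mul_le_add_sum_of_le_add_div two_pos
      (u := fun j ↦ S (t₀ + j)) (f := fun s ↦ b * (s : ℝ) ^ (-p)) hshift (k + 1)
    simp only [add_zero, mul_left_comm _ b, ← Finset.mul_sum] at hunrolled
    rw [show t₀ + k + 1 - t₀ = k + 1 by omega, div_mul_eq_mul_div, ← add_div,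
      le_div_iff₀ (by positivity), mul_comm]
    exact hunrolled
  · have hcast : (t : ℝ) - (t₀ : ℝ) = ((t - t₀ : ℕ) : ℝ) := by
      push_cast [Nat.cast_sub ht.le]; ring
    rw [hcast]
    exact sum_Icc_two_pow_mul_rpow_neg_le hp.le _

/-- if a nonnegative sequence satisfies `S t ≤ b (t - t₀)^(-p) + (1/2) S (t-1)`
for `t > t₀`, then `S t ≤ 2^(t₀-t) S t₀ + (b / 2^(t-t₀)) ∑_{s=1}^{t-t₀} 2^s s^(-p)`, and with
`t₁ = ⌊(t-t₀)/2⌋` the last sum is at most `2^(t₁+1) + 2^(t-t₀+1) ((t-t₀)/2)^(-p)`;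
hence `S t = O((t - t₀)^(-p))`. -/
theorem sublinear_tail_recursion (t₀ : ℕ) (S : ℕ → ℝ) (hS : ∀ t, 0 ≤ S t)
    (b p : ℝ) (hb : 0 ≤ b) (hp : 0 < p)
    (hrec : ∀ t > t₀, S t ≤ b * ((t : ℝ) - (t₀ : ℝ)) ^ (-p) + (1 / 2) * S (t - 1)) :
    (∀ t > t₀, S t ≤ S t₀ / 2 ^ (t - t₀) +
        (b / 2 ^ (t - t₀)) * ∑ s ∈ Finset.Icc 1 (t - t₀), (2 : ℝ) ^ s * (s : ℝ) ^ (-p)) ∧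
      (∀ t > t₀, ∑ s ∈ Finset.Icc 1 (t - t₀), (2 : ℝ) ^ s * (s : ℝ) ^ (-p) ≤
        (2 : ℝ) ^ ((t - t₀) / 2 + 1) +
          (2 : ℝ) ^ (t - t₀ + 1) * (((t : ℝ) - (t₀ : ℝ)) / 2) ^ (-p)) :=
  sublinear_tail_recursion_general t₀ S b p hp hrec
end

section
/- Let Φ: ℝ^m → ℝ be continuous, g: ℝ^m → ℝ ∪ {+∞} proper lower semicontinuous, η > 0, and suppose x_{t+1} ∈ argmin_u { g(u) + (1/(2η))‖u − x_t + η w_t‖² } along a subsequence x_{t(j)} → x*, with (w_{t(j)}) bounded and ‖x_{t(j)} − x_{t(j)−1}‖ → 0 (indices shifted appropriately so x_{t(j)} is the prox output from x_{t(j)−1}, w_{t(j)−1}). Then g(x_{t(j)}) → g(x*), and hence (Φ+g)(x_{t(j)}) → (Φ+g)(x*). -/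
open Real Filter Topology

/-!
Testing the proximal inequality against the limit point `x*` gives
`g (x_{t j}) ≤ g x* + (‖x* - z_j‖² - ‖x_{t j} - z_j‖²) / (2η)`, where
`z_j = x_{t j - 1} - η w_{t j - 1}` is the anchor of the proximal step. Since `x_{t j} - z_j`
stays bounded and `x* - x_{t j} → 0`, the error term tends to `0`, so
`limsup g (x_{t j}) ≤ g x*`; lower semicontinuity supplies the matching `liminf` bound.
-/

namespace EReal

theorem le_add_sub_of_add_coe_le_add_coe {x y : EReal} {a b : ℝ} (h : x + a ≤ y + b) :
    x ≤ y + ((b - a : ℝ) : EReal) := by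
  refine (addLECancellable_coe a).add_le_add_iff_right.1 ?_
  rwa [add_assoc, ← coe_add, _root_.sub_add_cancel]

theorem limsup_le_of_le_add_of_tendsto_zero {ι : Type*} {l : Filter ι} [l.NeBot]
    {u : ι → EReal} {b : EReal} {ε : ι → ℝ} (h : ∀ᶠ i in l, u i ≤ b + ε i)
    (hε : Tendsto ε l (𝓝 0)) : limsup u l ≤ b := by
  have hb : Tendsto (fun i => b + (ε i : EReal)) l (𝓝 b) := by
    have := (continuousAt_add (p := (b, 0)) (Or.inr zero_ne_bot)
      (Or.inr zero_ne_top)).tendsto.comp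
      (tendsto_const_nhds.prodMk_nhds ((continuous_coe_real_ereal.tendsto 0).comp hε))
    simpa [Function.comp_def] using this
  exact (limsup_le_limsup h).trans hb.limsup_eq.le

end EReal

theorem LowerSemicontinuous.tendsto_comp_of_limsup_le {α ι γ : Type*} [TopologicalSpace α]
    [CompleteLinearOrder γ] [TopologicalSpace γ] [OrderTopology γ] {f : α → γ}
    (hf : LowerSemicontinuous f) {l : Filter ι} {x : ι → α} {a : α} (hx : Tendsto x l (𝓝 a))
    (h : limsup (f ∘ x) l ≤ f a) : Tendsto (f ∘ x) l (𝓝 (f a)) :=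
  tendsto_of_le_liminf_of_limsup_le ((le_liminf_iff).2 fun _ hy => hx.eventually (hf a _ hy)) h

theorem tendsto_norm_add_sq_sub_norm_sq {ι E : Type*} [SeminormedAddCommGroup E] {l : Filter ι}
    {a v : ι → E} (ha : Tendsto a l (𝓝 0)) (hv : IsBoundedUnder (· ≤ ·) l fun i => ‖v i‖) :
    Tendsto (fun i => ‖a i + v i‖ ^ 2 - ‖v i‖ ^ 2) l (𝓝 0) := by
  obtain ⟨C, hC⟩ := hv
  have ha' : Tendsto (fun i => ‖a i‖) l (𝓝 0) := by simpa using ha.norm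
  refine squeeze_zero_norm' (a := fun i => ‖a i‖ * (‖a i‖ + 2 * C)) ?_
    (by simpa using ha'.mul (ha'.add_const (2 * C)))
  filter_upwards [hC] with i hi
  have hdiff : |‖a i + v i‖ - ‖v i‖| ≤ ‖a i‖ := by
    simpa using abs_norm_sub_norm_le (a i + v i) (v i)
  have hsum : ‖a i + v i‖ + ‖v i‖ ≤ ‖a i‖ + 2 * C := by
    linarith [norm_add_le (a i) (v i), show ‖v i‖ ≤ C from hi]
  rw [sq_sub_sq, Real.norm_eq_abs, abs_mul, abs_of_nonneg (by positivity), mul_comm]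
  exact mul_le_mul hdiff hsum (by positivity) (norm_nonneg _)

theorem LowerSemicontinuous.tendsto_comp_of_prox_le {ι E : Type*} [SeminormedAddCommGroup E]
    {g : E → EReal} (hg : LowerSemicontinuous g) {l : Filter ι} [l.NeBot] {p z : ι → E} {a : E}
    {c : ℝ} (hp : Tendsto p l (𝓝 a)) (hz : IsBoundedUnder (· ≤ ·) l fun i => ‖p i - z i‖)
    (hopt : ∀ᶠ i in l,
      g (p i) + ((c * ‖p i - z i‖ ^ 2 : ℝ) : EReal) ≤ g a + ((c * ‖a - z i‖ ^ 2 : ℝ) : EReal)) :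
    Tendsto (g ∘ p) l (𝓝 (g a)) := by
  have herr : Tendsto (fun i => c * (‖a - z i‖ ^ 2 - ‖p i - z i‖ ^ 2)) l (𝓝 0) := by
    have hap : Tendsto (fun i => a - p i) l (𝓝 0) := by
      simpa using (tendsto_const_nhds (x := a)).sub hp
    simpa using (tendsto_norm_add_sq_sub_norm_sq hap hz).const_mul c
  refine hg.tendsto_comp_of_limsup_le hp (EReal.limsup_le_of_le_add_of_tendsto_zero ?_ herr)
  filter_upwards [hopt] with i hi
  simpa [mul_sub] using EReal.le_add_sub_of_add_coe_le_add_coe hi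

theorem prox_value_convergence_general (m : ℕ)
    (Φ : EuclideanSpace ℝ (Fin m) → ℝ) (hΦ : Continuous Φ)
    (g : EuclideanSpace ℝ (Fin m) → EReal)
    (hg_lsc : LowerSemicontinuous g)
    (η : ℝ)
    (x w : ℕ → EuclideanSpace ℝ (Fin m)) (t : ℕ → ℕ)
    (xstar : EuclideanSpace ℝ (Fin m))
    (hconv : Tendsto (fun j => x (t j)) atTop (𝓝 xstar))
    (hbdd : ∃ R : ℝ, ∀ j, ‖w (t j - 1)‖ ≤ R)
    (hdiff : Tendsto (fun j => ‖x (t j) - x (t j - 1)‖) atTop (𝓝 0))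
    (hprox : ∀ j, ∀ u,
      g (x (t j)) +
          (((1 / (2 * η)) * ‖x (t j) - x (t j - 1) + η • w (t j - 1)‖ ^ 2 : ℝ) : EReal) ≤
        g u + (((1 / (2 * η)) * ‖u - x (t j - 1) + η • w (t j - 1)‖ ^ 2 : ℝ) : EReal)) :
    Tendsto (fun j => g (x (t j))) atTop (𝓝 (g xstar)) ∧
      Tendsto (fun j => (Φ (x (t j)) : EReal) + g (x (t j))) atTop
        (𝓝 ((Φ xstar : EReal) + g xstar)) := by
  obtain ⟨R, hR⟩ := hbdd
  set z : ℕ → EuclideanSpace ℝ (Fin m) := fun j => x (t j - 1) - η • w (t j - 1)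
  have hanchor : ∀ u j, u - x (t j - 1) + η • w (t j - 1) = u - z j := fun u j => by
    simp only [z]; abel
  have hz : IsBoundedUnder (· ≤ ·) atTop fun j => ‖x (t j) - z j‖ := by
    refine isBoundedUnder_of_eventually_le (a := 1 + ‖η‖ * R) ?_
    filter_upwards [hdiff.eventually (ge_mem_nhds one_pos)] with j hj
    calc ‖x (t j) - z j‖ ≤ ‖x (t j) - x (t j - 1)‖ + ‖η • w (t j - 1)‖ := by
          rw [← hanchor]; exact norm_add_le _ _
      _ ≤ 1 + ‖η‖ * R := by
          rw [norm_smul]; gcongr; exact hR j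
  have hg : Tendsto (fun j => g (x (t j))) atTop (𝓝 (g xstar)) :=
    hg_lsc.tendsto_comp_of_prox_le hconv hz
      (Eventually.of_forall fun j => by simpa only [hanchor] using hprox j xstar)
  have hΦ' : Tendsto (fun j => (Φ (x (t j)) : EReal)) atTop (𝓝 (Φ xstar : EReal)) :=
    (continuous_coe_real_ereal.tendsto _).comp ((hΦ.tendsto _).comp hconv)
  exact ⟨hg, (EReal.continuousAt_add (Or.inl (EReal.coe_ne_top _))
    (Or.inl (EReal.coe_ne_bot _))).tendsto.comp (hΦ'.prodMk_nhds hg)⟩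

/-- continuity of the objective value along a convergent subsequence of
proximal iterates. If `Φ` is continuous, `g : ℝ^m → ℝ ∪ {+∞}` is proper lsc,
`x (t j)` is the proximal update from `(x (t j - 1), w (t j - 1))`, `x (t j) → xstar`,
`(w (t j - 1))` is bounded and `‖x (t j) - x (t j - 1)‖ → 0`, then
`g (x (t j)) → g xstar` and `(Φ + g)(x (t j)) → (Φ + g)(xstar)`. -/
theorem prox_value_convergence (m : ℕ)
    (Φ : EuclideanSpace ℝ (Fin m) → ℝ) (hΦ : Continuous Φ)
    (g : EuclideanSpace ℝ (Fin m) → EReal)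
    (hg_bot : ∀ z, g z ≠ ⊥) (hg_proper : ∃ z, g z ≠ ⊤)
    (hg_lsc : LowerSemicontinuous g)
    (η : ℝ) (hη : 0 < η)
    (x w : ℕ → EuclideanSpace ℝ (Fin m)) (t : ℕ → ℕ)
    (hmono : StrictMono t) (ht1 : ∀ j, 1 ≤ t j)
    (xstar : EuclideanSpace ℝ (Fin m))
    (hconv : Tendsto (fun j => x (t j)) atTop (𝓝 xstar))
    (hbdd : ∃ R : ℝ, ∀ j, ‖w (t j - 1)‖ ≤ R)
    (hdiff : Tendsto (fun j => ‖x (t j) - x (t j - 1)‖) atTop (𝓝 0))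
    (hprox : ∀ j, ∀ u,
      g (x (t j)) +
          (((1 / (2 * η)) * ‖x (t j) - x (t j - 1) + η • w (t j - 1)‖ ^ 2 : ℝ) : EReal) ≤
        g u + (((1 / (2 * η)) * ‖u - x (t j - 1) + η • w (t j - 1)‖ ^ 2 : ℝ) : EReal)) :
    Tendsto (fun j => g (x (t j))) atTop (𝓝 (g xstar)) ∧
      Tendsto (fun j => (Φ (x (t j)) : EReal) + g (x (t j))) atTop
        (𝓝 ((Φ xstar : EReal) + g xstar)) :=
  prox_value_convergence_general m Φ hΦ g hg_lsc η x w t xstar hconv hbdd hdiff hprox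
end
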